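/- arXiv:1409.1058 — 3 statements merged into one kernel-verified Lean document; each statement's English description precedes it below -/
import Mathlib

section
/- On a contact metric 5-manifold, for any adjoint-valued horizontal self-dual 2-form B one has the identity (d_A†B)^H = ι_R ⋆ d_A B. -/
/-!
Abstract calculus of (adjoint-valued) differential forms on a contact metric
5-manifold `(M, κ, R, g)` carrying a principal `G`-bundle with connection `A`
(`G` compact).

`Ωp` is the real vector space of adjoint-valued `p`-forms on `M`.  The
structure records the operations used in the paper: the Hodge star `⋆` of the
compatible metric `g = ½ dκ(J·,·) + κ⊗κ`, contraction `ι_R` with the Reeb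
vector field (`ι_R κ = 1`, `ι_R dκ = 0`), wedge with the contact form `κ` and
with `dκ`, the covariant exterior derivative `d_A = d − i[A,·]`, the curvature
`F` of the connection (satisfying the Bianchi identity), the quaternionic
cross product `×` on horizontal self-dual 2-forms
`(X×Y)ᵃ_{mn} = ½ fᵃ_{bc}(X^b_{mp}(Y^c)_n{}^p − X^b_{np}(Y^c)_m{}^p)`,
and the global inner products `(α,β) = Tr ∫_M α ∧ ⋆β`, together with the
standard identities of contact metric geometry on a 5-manifold.
-/
structure ContactInstantonSetup where
  /-- adjoint-valued `p`-forms on the 5-manifold, `p = 0, …, 5` -/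
  Ω0 : Type*
  Ω1 : Type*
  Ω2 : Type*
  Ω3 : Type*
  Ω4 : Type*
  Ω5 : Type*
  [grp0 : AddCommGroup Ω0]
  [grp1 : AddCommGroup Ω1]
  [grp2 : AddCommGroup Ω2]
  [grp3 : AddCommGroup Ω3]
  [grp4 : AddCommGroup Ω4]
  [grp5 : AddCommGroup Ω5]
  [mod0 : Module ℝ Ω0]
  [mod1 : Module ℝ Ω1]
  [mod2 : Module ℝ Ω2]
  [mod3 : Module ℝ Ω3]
  [mod4 : Module ℝ Ω4]
  [mod5 : Module ℝ Ω5]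
  /-- the Hodge star `⋆` of the compatible metric `g` -/
  star1 : Ω1 →ₗ[ℝ] Ω4
  star2 : Ω2 →ₗ[ℝ] Ω3
  star3 : Ω3 →ₗ[ℝ] Ω2
  star4 : Ω4 →ₗ[ℝ] Ω1
  /-- contraction `ι_R` with the Reeb vector field -/
  iR1 : Ω1 →ₗ[ℝ] Ω0
  iR2 : Ω2 →ₗ[ℝ] Ω1
  iR3 : Ω3 →ₗ[ℝ] Ω2
  iR4 : Ω4 →ₗ[ℝ] Ω3
  /-- wedge with the contact form `κ` -/
  k0 : Ω0 →ₗ[ℝ] Ω1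
  k1 : Ω1 →ₗ[ℝ] Ω2
  k2 : Ω2 →ₗ[ℝ] Ω3
  k3 : Ω3 →ₗ[ℝ] Ω4
  /-- wedge with the 2-form `dκ` -/
  dk0 : Ω0 →ₗ[ℝ] Ω2
  dk1 : Ω1 →ₗ[ℝ] Ω3
  dk2 : Ω2 →ₗ[ℝ] Ω4
  /-- covariant exterior derivative `d_A = d − i[A, ·]` of the connection `A` -/
  dA0 : Ω0 →ₗ[ℝ] Ω1
  dA1 : Ω1 →ₗ[ℝ] Ω2
  dA2 : Ω2 →ₗ[ℝ] Ω3
  dA3 : Ω3 →ₗ[ℝ] Ω4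
  /-- the curvature `F` of the connection `A` -/
  F : Ω2
  /-- cross product on horizontal self-dual 2-forms (indices raised with `g`) -/
  cross : Ω2 → Ω2 → Ω2
  /-- global inner product `(α,β) = Tr ∫_M α ∧ ⋆β` on 1-forms -/
  inner1 : Ω1 → Ω1 → ℝ
  /-- global inner product `(α,β) = Tr ∫_M α ∧ ⋆β` on 2-forms -/
  inner2 : Ω2 → Ω2 → ℝ
  -- `⋆⋆ = 1` on a Riemannian 5-manifold
  star3_star2 : ∀ ω, star3 (star2 ω) = ω
  star2_star3 : ∀ ω, star2 (star3 ω) = ω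
  star4_star1 : ∀ ω, star4 (star1 ω) = ω
  star1_star4 : ∀ ω, star1 (star4 ω) = ω
  -- `ι_R ∘ ι_R = 0`
  iR_iR2 : ∀ ω, iR1 (iR2 ω) = 0
  iR_iR3 : ∀ ω, iR2 (iR3 ω) = 0
  iR_iR4 : ∀ ω, iR3 (iR4 ω) = 0
  -- `κ ∧ κ = 0`
  k_k0 : ∀ ω, k1 (k0 ω) = 0
  k_k1 : ∀ ω, k2 (k1 ω) = 0
  k_k2 : ∀ ω, k3 (k2 ω) = 0
  -- `ι_R κ = 1`, i.e. `ι_R (κ ∧ α) = α − κ ∧ ι_R α`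
  iR_k0 : ∀ f, iR1 (k0 f) = f
  iR_k1 : ∀ α, iR2 (k1 α) = α - k0 (iR1 α)
  iR_k2 : ∀ α, iR3 (k2 α) = α - k1 (iR2 α)
  iR_k3 : ∀ α, iR4 (k3 α) = α - k2 (iR3 α)
  -- `ι_R (⋆ ω_p) = (−1)^p ⋆ (κ ∧ ω_p)` for the compatible metric
  iR_star1 : ∀ ω, iR4 (star1 ω) = - star2 (k1 ω)
  iR_star2 : ∀ ω, iR3 (star2 ω) = star3 (k2 ω)
  iR_star3 : ∀ ω, iR2 (star3 ω) = - star4 (k3 ω)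
  -- Leibniz rule `d_A (κ ∧ ω) = dκ ∧ ω − κ ∧ d_A ω`
  dA_k0 : ∀ f, dA1 (k0 f) = dk0 f - k1 (dA0 f)
  dA_k1 : ∀ α, dA2 (k1 α) = dk1 α - k2 (dA1 α)
  dA_k2 : ∀ ω, dA3 (k2 ω) = dk2 ω - k3 (dA2 ω)
  -- `ι_R dκ = 0`, i.e. `ι_R (dκ ∧ α) = dκ ∧ ι_R α`
  iR_dk1 : ∀ α, iR3 (dk1 α) = dk0 (iR1 α)
  iR_dk2 : ∀ ω, iR4 (dk2 ω) = dk1 (iR2 ω)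
  -- Bianchi identity for the curvature of a connection
  bianchi : dA2 F = 0
  -- bilinearity of the cross product under real scalings
  cross_smul_left : ∀ (r : ℝ) (X Y : Ω2), cross (r • X) Y = r • cross X Y
  cross_smul_right : ∀ (r : ℝ) (X Y : Ω2), cross X (r • Y) = r • cross X Y

attribute [instance] ContactInstantonSetup.grp0 ContactInstantonSetup.grp1
  ContactInstantonSetup.grp2 ContactInstantonSetup.grp3
  ContactInstantonSetup.grp4 ContactInstantonSetup.grp5
  ContactInstantonSetup.mod0 ContactInstantonSetup.mod1
  ContactInstantonSetup.mod2 ContactInstantonSetup.mod3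
  ContactInstantonSetup.mod4 ContactInstantonSetup.mod5

namespace ContactInstantonSetup

variable (S : ContactInstantonSetup)

/-- horizontal component of a 1-form, `α^H = α − κ ∧ ι_R α` -/
def H1 (α : S.Ω1) : S.Ω1 := α - S.k0 (S.iR1 α)

/-- horizontal component of a 2-form, `ω^H = ω − κ ∧ ι_R ω` -/
def H2 (ω : S.Ω2) : S.Ω2 := ω - S.k1 (S.iR2 ω)

/-- self-dual part of the horizontal component of a 2-form,
`ω_H^+ = ½ (ω^H + ι_R ⋆ ω^H)` -/
noncomputable def FHp (ω : S.Ω2) : S.Ω2 := (2⁻¹ : ℝ) • (S.H2 ω + S.iR3 (S.star2 (S.H2 ω)))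

/-- `ω ∈ Ω_H^{2+}`: `ω` is horizontal (`ι_R ω = 0`) and self-dual
(`ι_R ⋆ ω = ω`, equivalently `⋆ω = κ ∧ ω`) -/
def IsHSD (ω : S.Ω2) : Prop := S.iR2 ω = 0 ∧ S.iR3 (S.star2 ω) = ω

/-- the formal adjoint `d_A† = ⋆ d_A ⋆` acting on 2-forms -/
def dAdag2 (ω : S.Ω2) : S.Ω1 := S.star4 (S.dA3 (S.star2 ω))

/-- gauge covariant Lie derivative `L_R^A = d_A ι_R + ι_R d_A` on 2-forms -/
def LR2 (ω : S.Ω2) : S.Ω2 := S.dA1 (S.iR2 ω) + S.iR3 (S.dA2 ω)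

end ContactInstantonSetup

/-- On a contact metric 5-manifold, for any adjoint-valued
horizontal self-dual 2-form `B` one has the identity
`(d_A† B)^H = ι_R ⋆ d_A B`. -/
theorem dAdag_horizontal_eq_iR_star_dA (S : ContactInstantonSetup)
    (B : S.Ω2) (hB : S.IsHSD B) :
    S.H1 (S.dAdag2 B) = S.iR2 (S.star3 (S.dA2 B)) := by
  obtain ⟨hH, hSD⟩ := hB
  -- self-duality: ⋆B = κ ∧ B
  have hstarB : S.star2 B = S.k2 B := by
    have h1 : S.star3 (S.k2 B) = B := by rw [← S.iR_star2 B, hSD]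
    calc S.star2 B = S.star2 (S.star3 (S.k2 B)) := by rw [h1]
      _ = S.k2 B := S.star2_star3 _
  set α : S.Ω1 := S.star4 (S.dk2 B) with hαdef
  set g : S.Ω1 := S.star4 (S.k3 (S.dA2 B)) with hgdef
  -- κ ∧ α = 0
  have hk1α : S.k1 α = 0 := by
    have h2 : S.iR4 (S.star1 α) = - S.star2 (S.k1 α) := S.iR_star1 α
    rw [hαdef, S.star1_star4, S.iR_dk2, hH, map_zero] at h2
    have h3 : S.star2 (S.k1 α) = 0 := by
      have := h2.symm
      rwa [neg_eq_zero] at this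
    calc S.k1 α = S.star3 (S.star2 (S.k1 α)) := (S.star3_star2 _).symm
      _ = 0 := by rw [h3, map_zero]
  -- so α is vertical: α = κ ∧ ι_R α
  have hα : α = S.k0 (S.iR1 α) := by
    have h := S.iR_k1 α
    rw [hk1α, map_zero] at h
    exact (sub_eq_zero.mp h.symm)
  -- RHS: ι_R ⋆ d_A B = -g
  have hRHS : S.iR2 (S.star3 (S.dA2 B)) = -g := by
    rw [S.iR_star3, hgdef]
  -- ι_R g = 0
  have hiRg : S.iR1 g = 0 := by
    have : g = - S.iR2 (S.star3 (S.dA2 B)) := by rw [hRHS, neg_neg]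
    rw [this, map_neg, S.iR_iR2, neg_zero]
  -- compute d_A† B
  have hdag : S.dAdag2 B = α - g := by
    rw [ContactInstantonSetup.dAdag2, hstarB, S.dA_k2, map_sub]
  rw [ContactInstantonSetup.H1, hdag, hRHS, map_sub, map_sub, hiRg, map_zero,
    sub_zero, ← hα]
  abel
end

section
/- On a K-contact 5-manifold, for any adjoint-valued horizontal self-dual 2-form B one has ⋆d_A B = L_R^A B + κ∧d_A†B, where L_R^A = d_A ι_R + ι_R d_A is the gauge-covariant Lie derivative. -/
/-- A K-contact structure: the contact metric 5-manifold `(M, κ, R, g)` has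
Killing Reeb vector field `R` (`L_R g = 0`); consequently the gauge covariant
Lie derivative `L_R^A = d_A ι_R + ι_R d_A` commutes with the Hodge star. -/
structure KContactSetup extends ContactInstantonSetup where
  -- `L_R^A ∘ ⋆ = ⋆ ∘ L_R^A` on 2-forms (the Reeb field is Killing)
  lie_star2 : ∀ ω : Ω2,
    dA2 (iR3 (star2 ω)) + iR4 (dA3 (star2 ω))
      = star2 (dA1 (iR2 ω) + iR3 (dA2 ω))

/-- On a K-contact 5-manifold, for any adjoint-valued
horizontal self-dual 2-form `B` one has
`⋆ d_A B = L_R^A B + κ ∧ d_A† B`, where `L_R^A = d_A ι_R + ι_R d_A` is the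
gauge covariant Lie derivative. -/
theorem star_dA_eq_lie_add_kappa_dAdag (S : KContactSetup)
    (B : S.Ω2) (hB : S.IsHSD B) :
    S.star3 (S.dA2 B) = S.LR2 B + S.k1 (S.dAdag2 B) := by
  obtain ⟨h1, h2⟩ := hB
  -- `⋆B = κ ∧ B` (self-duality)
  have k2B : S.k2 B = S.star2 B := by
    have := S.iR_star2 B
    rw [h2] at this
    calc S.k2 B = S.star2 (S.star3 (S.k2 B)) := (S.star2_star3 _).symm
      _ = S.star2 B := by rw [← this]
  set X := S.iR3 (S.dA2 B) with hX
  -- `X = ι_R d_A B` is horizontal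
  have hXh : S.iR2 X = 0 := S.iR_iR3 _
  -- from the K-contact (Killing) identity: `κ ∧ X = ⋆X`
  have hk : S.k2 X = S.star2 X := by
    have hl := S.lie_star2 B
    rw [h1, map_zero, zero_add, h2, ← k2B, S.dA_k2, map_sub, S.iR_dk2, h1,
      map_zero, S.iR_k3] at hl
    -- hl : dA2 B + (0 - (dA2 B - k2 X)) = star2 X
    have : S.k2 X = S.dA2 B + (0 - (S.dA2 B - S.k2 X)) := by abel
    rw [this, hl]
  -- `d_A ⋆ B = dκ ∧ B − κ ∧ d_A B`
  have hdA3 : S.dA3 (S.star2 B) = S.dk2 B - S.k3 (S.dA2 B) := by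
    rw [← k2B, S.dA_k2]
  -- `κ ∧ ⋆(dκ ∧ B) = 0` since `dκ ∧ B` is horizontal
  have hvert : S.k1 (S.star4 (S.dk2 B)) = 0 := by
    have h4 : S.iR4 (S.dk2 B) = 0 := by rw [S.iR_dk2, h1, map_zero]
    have := S.iR_star1 (S.star4 (S.dk2 B))
    rw [S.star1_star4, h4] at this
    have h0 : S.star2 (S.k1 (S.star4 (S.dk2 B))) = 0 :=
      neg_eq_zero.mp this.symm
    calc S.k1 (S.star4 (S.dk2 B))
        = S.star3 (S.star2 (S.k1 (S.star4 (S.dk2 B)))) := (S.star3_star2 _).symm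
      _ = 0 := by rw [h0, map_zero]
  -- `⋆(κ ∧ d_A B) = − ι_R ⋆ d_A B`
  have hstar4 : S.star4 (S.k3 (S.dA2 B)) = - S.iR2 (S.star3 (S.dA2 B)) := by
    rw [S.iR_star3]; abel
  -- `κ ∧ ⋆(d_A B)` relation: decompose `⋆ d_A B`
  have hk2w : S.k2 (S.star3 (S.dA2 B)) = S.star2 X := by
    have := S.iR_star2 (S.star3 (S.dA2 B))
    rw [S.star2_star3] at this
    calc S.k2 (S.star3 (S.dA2 B))
        = S.star2 (S.star3 (S.k2 (S.star3 (S.dA2 B)))) := (S.star2_star3 _).symm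
      _ = S.star2 X := by rw [← this]
  have hdec : S.star3 (S.dA2 B)
      = X + S.k1 (S.iR2 (S.star3 (S.dA2 B))) := by
    have h5 := S.iR_k2 (S.star3 (S.dA2 B))
    rw [hk2w, ← hk, S.iR_k2, hXh, map_zero, sub_zero] at h5
    -- h5 : X = star3 (dA2 B) - k1 (iR2 (star3 (dA2 B)))
    rw [h5]; abel
  -- assemble
  have hLR : S.LR2 B = X := by
    unfold ContactInstantonSetup.LR2
    rw [h1, map_zero, zero_add]
  have hdag : S.k1 (S.dAdag2 B) = S.k1 (S.iR2 (S.star3 (S.dA2 B))) := by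
    unfold ContactInstantonSetup.dAdag2
    rw [hdA3, map_sub, map_sub, hvert, hstar4]
    simp
  rw [hLR, hdag]; exact hdec
end

section
/- On a K-contact 5-manifold, for any adjoint-valued horizontal self-dual 2-form B, the two conditions (d_A†B)^H = 0 and ι_R d_A B = 0 hold simultaneously if and only if d_A B = 0. -/
/-- On a K-contact 5-manifold, for any adjoint-valued
horizontal self-dual 2-form `B`, the two conditions `(d_A† B)^H = 0` and
`ι_R d_A B = 0` hold simultaneously if and only if `d_A B = 0`. -/
theorem dAdagH_and_iRdA_iff_dA_closed (S : KContactSetup)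
    (B : S.Ω2) (hB : S.IsHSD B) :
    (S.H1 (S.dAdag2 B) = 0 ∧ S.iR3 (S.dA2 B) = 0) ↔ S.dA2 B = 0 := by

  obtain ⟨hhor, hsd⟩ := hB
  -- `⋆B = κ ∧ B`
  have hstarB : S.star2 B = S.k2 B := by
    have := S.iR_star2 B
    rw [hsd] at this
    have := congrArg S.star2 this
    rw [S.star2_star3] at this
    exact this
  set D := S.dA3 (S.star2 B) with hD
  -- Lie derivative identity specialized at `B`
  have hlie : S.dA2 B + S.iR4 D = S.star2 (S.iR3 (S.dA2 B)) := by
    have := S.lie_star2 B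
    rw [hsd, hhor, map_zero, zero_add] at this
    exact this
  -- `κ ∧ ⋆μ = -⋆(ι_R μ)` for 4-forms
  have hk1star4 : ∀ μ : S.Ω4, S.k1 (S.star4 μ) = - S.star3 (S.iR4 μ) := by
    intro μ
    have h := S.iR_star1 (S.star4 μ)
    rw [S.star1_star4] at h
    have h2 := congrArg S.star3 h
    rw [map_neg, S.star3_star2] at h2
    rw [h2, neg_neg]
  -- main formula for the horizontal part of `d_A† B`
  have hH1 : S.H1 (S.dAdag2 B)
      = S.star4 (S.k3 (S.star2 (S.iR3 (S.dA2 B)))) - S.star4 (S.k3 (S.dA2 B)) := by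
    have h0 : S.H1 (S.dAdag2 B) = S.iR2 (S.k1 (S.dAdag2 B)) := by
      rw [S.iR_k1]; rfl
    rw [h0]
    show S.iR2 (S.k1 (S.star4 D)) = _
    rw [hk1star4, map_neg, S.iR_star3]
    have hiRD : S.iR4 D = S.star2 (S.iR3 (S.dA2 B)) - S.dA2 B := by
      have := hlie
      linear_combination (norm := module) this
    rw [hiRD, map_sub, map_sub, neg_neg]
  constructor
  · rintro ⟨h1, h2⟩
    rw [hH1, h2, map_zero, map_zero, map_zero, zero_sub, neg_eq_zero] at h1
    have hk : S.k3 (S.dA2 B) = 0 := by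
      have := congrArg S.star1 h1
      rwa [S.star1_star4, map_zero] at this
    have := congrArg S.iR4 hk
    rw [S.iR_k3, map_zero, h2, map_zero, sub_zero] at this
    exact this
  · intro h
    have h2 : S.iR3 (S.dA2 B) = 0 := by rw [h, map_zero]
    exact ⟨by simp [hH1, h, h2], h2⟩
end
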